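/- Soundness of the SDP constraint for the (ρ̂, δ)-diamond norm: let ρ̂ and ρ_in be density matrices indexed by (m × n) × (m × n) with ‖ρ̂ − ρ_in‖₁ ≤ δ for a real number δ ≥ 0, and let ρ' = Tr₂ ρ̂ and ρ = Tr₂ ρ_in be their partial traces over the second tensor factor. Then the real number tr(ρ'·ρ) satisfies tr(ρ'·ρ) ≥ ‖ρ'‖_F · (‖ρ'‖_F − δ). -/

import Mathlib

open Matrix
open scoped ComplexOrder

/-- The trace norm of a complex square matrix: the trace of the positive
semidefinite square root of `Aᴴ * A`. -/
noncomputable def traceNorm {d : Type*} [Fintype d] [DecidableEq d] (A : Matrix d d ℂ) : ℝ :=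
  (((Matrix.posSemidef_conjTranspose_mul_self A).1.eigenvectorUnitary.1 *
      diagonal (((↑) : ℝ → ℂ) ∘ (√·) ∘ (Matrix.posSemidef_conjTranspose_mul_self A).1.eigenvalues) *
      (star (Matrix.posSemidef_conjTranspose_mul_self A).1.eigenvectorUnitary : Matrix d d ℂ)).trace).re

/-- The Frobenius norm of a complex matrix. -/
noncomputable def frobeniusNorm {d : Type*} [Fintype d] (A : Matrix d d ℂ) : ℝ :=
  Real.sqrt (∑ i, ∑ j, ‖A i j‖ ^ 2)

/-- A density matrix: positive semidefinite (hence Hermitian) with trace 1. -/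
def IsDensity {d : Type*} [Fintype d] (ρ : Matrix d d ℂ) : Prop :=
  ρ.PosSemidef ∧ ρ.trace = 1

/-- Partial trace over the second tensor factor. -/
noncomputable def ptrace2 {m n : Type*} [Fintype n] (M : Matrix (m × n) (m × n) ℂ) :
    Matrix m m ℂ :=
  Matrix.of fun i j => ∑ k, M (i, k) (j, k)

/-!
Write `Δ = ρ̂ - ρ_in`, so that `Tr₂ ρ_in = ρ' - Tr₂ Δ` and
`tr(ρ' ρ) = ‖ρ'‖_F² - tr(ρ' Tr₂ Δ)`. Moving the partial trace across,
`tr(ρ' Tr₂ Δ) = tr((ρ' ⊗ 1) Δ)`, and expanding the Hermitian `Δ = ∑ₐ λₐ uₐ uₐᴴ` in an orthonormal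
eigenbasis gives `|tr((ρ' ⊗ 1) Δ)| ≤ ∑ₐ |λₐ| |uₐᴴ (ρ' ⊗ 1) uₐ| ≤ ‖Δ‖₁ ‖ρ'‖_F`: the quadratic form of
`ρ' ⊗ 1` is a sum of quadratic forms of `ρ'`, each bounded by Cauchy–Schwarz through the Frobenius
norm.
-/

open scoped Kronecker

theorem norm_dotProduct_sq_le {R d : Type*} [SeminormedRing R] [Fintype d] (u v : d → R) :
    ‖u ⬝ᵥ v‖ ^ 2 ≤ (∑ i, ‖u i‖ ^ 2) * ∑ i, ‖v i‖ ^ 2 :=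
  calc ‖u ⬝ᵥ v‖ ^ 2 ≤ (∑ i, ‖u i‖ * ‖v i‖) ^ 2 := by
        gcongr
        exact (norm_sum_le _ _).trans (Finset.sum_le_sum fun i _ => norm_mul_le _ _)
    _ ≤ (∑ i, ‖u i‖ ^ 2) * ∑ i, ‖v i‖ ^ 2 := Finset.sum_mul_sq_le_sq_mul_sq _ _ _

namespace Matrix.IsHermitian

variable {𝕜 : Type*} [RCLike 𝕜] {d : Type*} [Fintype d] [DecidableEq d] {A : Matrix d d 𝕜}

theorem trace_cfc (hA : A.IsHermitian) (f : ℝ → ℝ) :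
    (hA.cfc f).trace = ∑ i, (f (hA.eigenvalues i) : 𝕜) := by
  rw [IsHermitian.cfc, Unitary.conjStarAlgAut_apply, trace_mul_comm, ← Matrix.mul_assoc,
    Unitary.coe_star_mul_self, Matrix.one_mul, trace_diagonal]
  rfl

theorem trace_mul_eq_sum (hA : A.IsHermitian) (X : Matrix d d 𝕜) :
    (X * A).trace = ∑ i, (hA.eigenvalues i : 𝕜) *
      (star ⇑(hA.eigenvectorBasis i) ⬝ᵥ X *ᵥ ⇑(hA.eigenvectorBasis i)) := by
  conv_lhs => rw [hA.spectral_theorem, Unitary.conjStarAlgAut_apply]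
  rw [← Matrix.mul_assoc, trace_mul_comm, ← Matrix.mul_assoc]
  simp only [trace, diag, dotProduct, mulVec, mul_apply, diagonal_apply, Function.comp_apply,
    mul_ite, mul_zero, Finset.sum_ite_eq', Finset.mem_univ, if_true, star_apply,
    eigenvectorUnitary_apply, Finset.mul_sum, Finset.sum_mul]
  refine Finset.sum_congr rfl fun i _ => ?_
  rw [Finset.sum_comm]
  exact Finset.sum_congr rfl fun _ _ => Finset.sum_congr rfl fun _ _ => by
    rw [Pi.star_apply]; ring

end Matrix.IsHermitian

theorem traceNorm_eq_sum_abs_eigenvalues {d : Type*} [Fintype d] [DecidableEq d]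
    {A : Matrix d d ℂ} (hA : A.IsHermitian) : traceNorm A = ∑ i, |hA.eigenvalues i| := by
  have hsqrt : cfc Real.sqrt (Aᴴ * A) = cfc (fun x : ℝ => |x|) A := by
    rw [hA.eq, ← sq, ← cfc_pow_id (R := ℝ) A 2, ← cfc_comp' Real.sqrt (· ^ 2) A]
    simp only [Real.sqrt_sq_eq_abs]
  -- `traceNorm` is by definition the trace of the Hermitian functional calculus of `√` at `AᴴA`.
  change ((Matrix.posSemidef_conjTranspose_mul_self A).1.cfc Real.sqrt).trace.re = _
  rw [← IsHermitian.cfc_eq, hsqrt, hA.cfc_eq, hA.trace_cfc]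
  simp

theorem norm_trace_mul_le_traceNorm {d : Type*} [Fintype d] [DecidableEq d]
    {X M : Matrix d d ℂ} (hM : M.IsHermitian) {c : ℝ}
    (hX : ∀ v, ‖star v ⬝ᵥ X *ᵥ v‖ ≤ c * ∑ i, ‖v i‖ ^ 2) :
    ‖(X * M).trace‖ ≤ c * traceNorm M := by
  rw [hM.trace_mul_eq_sum, traceNorm_eq_sum_abs_eigenvalues hM, Finset.mul_sum]
  refine (norm_sum_le _ _).trans (Finset.sum_le_sum fun i _ => ?_)
  have hunit : ∑ j, ‖hM.eigenvectorBasis i j‖ ^ 2 = 1 := by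
    rw [← EuclideanSpace.norm_sq_eq, hM.eigenvectorBasis.orthonormal.1 i, one_pow]
  rw [norm_mul, RCLike.norm_ofReal, mul_comm c]
  gcongr
  simpa [hunit] using hX (hM.eigenvectorBasis i)

section frobeniusNorm

variable {d : Type*} [Fintype d]

theorem frobeniusNorm_nonneg (A : Matrix d d ℂ) : 0 ≤ frobeniusNorm A := Real.sqrt_nonneg _

theorem frobeniusNorm_sq (A : Matrix d d ℂ) : frobeniusNorm A ^ 2 = ∑ i, ∑ j, ‖A i j‖ ^ 2 :=
  Real.sq_sqrt (by positivity)

theorem Matrix.IsHermitian.re_trace_mul_self {A : Matrix d d ℂ} (hA : A.IsHermitian) :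
    (A * A).trace.re = frobeniusNorm A ^ 2 := by
  nth_rewrite 1 [← hA.eq]
  rw [frobeniusNorm_sq, Finset.sum_comm]
  simp only [trace, diag, mul_apply, conjTranspose_apply, Complex.re_sum, Complex.star_def,
    Complex.conj_mul', ← Complex.ofReal_pow, Complex.ofReal_re]

theorem sum_norm_mulVec_sq_le (A : Matrix d d ℂ) (w : d → ℂ) :
    ∑ i, ‖(A *ᵥ w) i‖ ^ 2 ≤ frobeniusNorm A ^ 2 * ∑ i, ‖w i‖ ^ 2 := by
  rw [frobeniusNorm_sq, Finset.sum_mul]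
  exact Finset.sum_le_sum fun i _ => norm_dotProduct_sq_le (A i) w

theorem norm_star_dotProduct_mulVec_le (A : Matrix d d ℂ) (w : d → ℂ) :
    ‖star w ⬝ᵥ A *ᵥ w‖ ≤ frobeniusNorm A * ∑ i, ‖w i‖ ^ 2 := by
  refine le_of_pow_le_pow_left₀ two_ne_zero
    (mul_nonneg (frobeniusNorm_nonneg A) (by positivity)) ?_
  calc ‖star w ⬝ᵥ A *ᵥ w‖ ^ 2 ≤ (∑ i, ‖w i‖ ^ 2) * ∑ i, ‖(A *ᵥ w) i‖ ^ 2 := by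
        simpa only [Pi.star_apply, norm_star] using norm_dotProduct_sq_le (star w) (A *ᵥ w)
    _ ≤ (∑ i, ‖w i‖ ^ 2) * (frobeniusNorm A ^ 2 * ∑ i, ‖w i‖ ^ 2) := by
        gcongr; exact sum_norm_mulVec_sq_le A w
    _ = (frobeniusNorm A * ∑ i, ‖w i‖ ^ 2) ^ 2 := by ring

end frobeniusNorm

section kronecker

variable {R m n : Type*} [Fintype m] [Fintype n] [DecidableEq n]

theorem star_dotProduct_kronecker_one_mulVec [Semiring R] [Star R] (A : Matrix m m R)
    (v : m × n → R) :
    star v ⬝ᵥ (A ⊗ₖ (1 : Matrix n n R)) *ᵥ v =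
      ∑ k, star (fun i => v (i, k)) ⬝ᵥ A *ᵥ fun i => v (i, k) := by
  simp only [dotProduct, mulVec, kroneckerMap_apply, one_apply, Fintype.sum_prod_type, mul_ite,
    mul_one, mul_zero, ite_mul, zero_mul, Finset.sum_ite_eq, Finset.mem_univ, if_true,
    Pi.star_apply]
  exact Finset.sum_comm

theorem norm_star_dotProduct_kronecker_one_mulVec_le (A : Matrix m m ℂ) (v : m × n → ℂ) :
    ‖star v ⬝ᵥ (A ⊗ₖ (1 : Matrix n n ℂ)) *ᵥ v‖ ≤ frobeniusNorm A * ∑ x, ‖v x‖ ^ 2 := by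
  rw [star_dotProduct_kronecker_one_mulVec, Fintype.sum_prod_type_right, Finset.mul_sum]
  exact (norm_sum_le _ _).trans (Finset.sum_le_sum fun k _ => norm_star_dotProduct_mulVec_le A _)

end kronecker

section ptrace2

variable {m n : Type*} [Fintype n]

theorem ptrace2_sub (M N : Matrix (m × n) (m × n) ℂ) :
    ptrace2 (M - N) = ptrace2 M - ptrace2 N := by
  ext i j
  simp [ptrace2, Finset.sum_sub_distrib]

theorem Matrix.IsHermitian.ptrace2 {M : Matrix (m × n) (m × n) ℂ} (hM : M.IsHermitian) :
    (ptrace2 M).IsHermitian := by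
  ext i j
  simp only [conjTranspose_apply, _root_.ptrace2, of_apply, star_sum]
  exact Finset.sum_congr rfl fun k _ => hM.apply (i, k) (j, k)

theorem trace_mul_ptrace2 [Fintype m] [DecidableEq n] (A : Matrix m m ℂ)
    (M : Matrix (m × n) (m × n) ℂ) :
    (A * ptrace2 M).trace = ((A ⊗ₖ (1 : Matrix n n ℂ)) * M).trace := by
  simp only [trace, diag, mul_apply, ptrace2, of_apply, kroneckerMap_apply, one_apply,
    Fintype.sum_prod_type, mul_ite, mul_one, mul_zero, ite_mul, zero_mul, Finset.sum_ite_eq,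
    Finset.mem_univ, if_true, Finset.mul_sum]
  exact Finset.sum_congr rfl fun _ _ => Finset.sum_comm

end ptrace2

theorem sdp_constraint_sound_general {m n : Type*} [Fintype m] [DecidableEq m]
    [Fintype n] [DecidableEq n]
    (ρhat ρin : Matrix (m × n) (m × n) ℂ)
    (hρhat : IsDensity ρhat) (hρin : IsDensity ρin)
    (δ : ℝ) (h : traceNorm (ρhat - ρin) ≤ δ) :
    ((ptrace2 ρhat * ptrace2 ρin).trace).re ≥
      frobeniusNorm (ptrace2 ρhat) * (frobeniusNorm (ptrace2 ρhat) - δ) := by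
  set ρ' := ptrace2 ρhat
  set F := frobeniusNorm ρ'
  have hΔ : (ρhat - ρin).IsHermitian := hρhat.1.1.sub hρin.1.1
  have hsplit : ptrace2 ρin = ρ' - ptrace2 (ρhat - ρin) := by rw [ptrace2_sub, sub_sub_cancel]
  have hpert : ((ρ' * ptrace2 (ρhat - ρin)).trace).re ≤ F * δ :=
    calc ((ρ' * ptrace2 (ρhat - ρin)).trace).re
        ≤ ‖((ρ' ⊗ₖ (1 : Matrix n n ℂ)) * (ρhat - ρin)).trace‖ := by
          rw [trace_mul_ptrace2]; exact Complex.re_le_norm _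
      _ ≤ F * traceNorm (ρhat - ρin) :=
          norm_trace_mul_le_traceNorm hΔ (norm_star_dotProduct_kronecker_one_mulVec_le ρ')
      _ ≤ F * δ := mul_le_mul_of_nonneg_left h (frobeniusNorm_nonneg ρ')
  rw [hsplit, Matrix.mul_sub, trace_sub, Complex.sub_re, hρhat.1.1.ptrace2.re_trace_mul_self]
  linarith

/-- Soundness of the SDP constraint for the `(ρ̂, δ)`-diamond norm. -/
theorem sdp_constraint_sound {m n : Type*} [Fintype m] [DecidableEq m]
    [Fintype n] [DecidableEq n]
    (ρhat ρin : Matrix (m × n) (m × n) ℂ)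
    (hρhat : IsDensity ρhat) (hρin : IsDensity ρin)
    (δ : ℝ) (hδ : 0 ≤ δ) (h : traceNorm (ρhat - ρin) ≤ δ) :
    ((ptrace2 ρhat * ptrace2 ρin).trace).re ≥
      frobeniusNorm (ptrace2 ρhat) * (frobeniusNorm (ptrace2 ρhat) - δ) :=
  sdp_constraint_sound_general ρhat ρin hρhat hρin δ h
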